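/- (Representability in abelian functional theories.) In an abelian functional theory, the set of pure-state representable densities coincides with the set of ensemble-state representable densities, and both equal the convex hull of the set of weights: ι*(P) = ι*(E) = conv(Ω). -/

import Mathlib

open Filter Topology

noncomputable section

variable {V H : Type*}
  [AddCommGroup V] [Module ℝ V]
  [NormedAddCommGroup H] [InnerProductSpace ℂ H]

/-- The real expectation value `⟨ψ, T ψ⟩` of an operator `T` in the vector `ψ`. -/
def expectation (T : H →ₗ[ℂ] H) (ψ : H) : ℝ := (inner ℂ ψ (T ψ) : ℂ).re

/-- The ground state energy of the Hamiltonian `ι v + W`. -/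
def energy (ι : V →ₗ[ℝ] (H →ₗ[ℂ] H)) (W : H →ₗ[ℂ] H) (v : V) : ℝ :=
  sInf {r : ℝ | ∃ ψ : H, ‖ψ‖ = 1 ∧ r = expectation (ι v + W) ψ}

/-- The density `ι*(|ψ⟩⟨ψ|)` of the pure state given by the unit vector `ψ`,
as an element of the dual space `V*`. -/
def pureDensity (ι : V →ₗ[ℝ] (H →ₗ[ℂ] H)) (ψ : H) : Module.Dual ℝ V where
  toFun v := expectation (ι v) ψ
  map_add' v w := by simp [expectation, inner_add_right]
  map_smul' c v := by
    simp only [map_smul, LinearMap.smul_apply, expectation, RingHom.id_apply, smul_eq_mul]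
    rw [← algebraMap_smul ℂ c ((ι v) ψ), Complex.coe_algebraMap, inner_smul_right]
    simp

/-- An ensemble state: a positive semidefinite operator of unit trace. -/
def IsEnsembleState (Γ : H →ₗ[ℂ] H) : Prop :=
  Γ.IsSymmetric ∧ (∀ x : H, 0 ≤ (inner ℂ x (Γ x) : ℂ).re) ∧ LinearMap.trace ℂ H Γ = 1

/-- The density `ι*(Γ)` of a state `Γ`, `v ↦ Tr(Γ ι(v))`, as an element of `V*`. -/
def traceDensity (ι : V →ₗ[ℝ] (H →ₗ[ℂ] H)) (Γ : H →ₗ[ℂ] H) : Module.Dual ℝ V where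
  toFun v := (LinearMap.trace ℂ H (ι v ∘ₗ Γ)).re
  map_add' v w := by simp [map_add, LinearMap.add_comp]
  map_smul' c v := by
    simp only [map_smul, RingHom.id_apply, smul_eq_mul]
    rw [← algebraMap_smul ℂ c (ι v), LinearMap.smul_comp, map_smul, Complex.coe_algebraMap]
    simp

/-- The pure (Levy–Lieb) universal functional `F_p`. -/
def Fp (ι : V →ₗ[ℝ] (H →ₗ[ℂ] H)) (W : H →ₗ[ℂ] H) (ρ : Module.Dual ℝ V) : ℝ :=
  sInf {r : ℝ | ∃ ψ : H, ‖ψ‖ = 1 ∧ pureDensity ι ψ = ρ ∧ r = expectation W ψ}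

/-- The ensemble (Lieb/Valone) universal functional `F_e`. -/
def Fe (ι : V →ₗ[ℝ] (H →ₗ[ℂ] H)) (W : H →ₗ[ℂ] H) (ρ : Module.Dual ℝ V) : ℝ :=
  sInf {r : ℝ | ∃ Γ : H →ₗ[ℂ] H, IsEnsembleState Γ ∧ traceDensity ι Γ = ρ ∧
    r = (LinearMap.trace ℂ H (W ∘ₗ Γ)).re}

/-- The weight space of a functional `α ∈ V*`. -/
def weightSpace (ι : V →ₗ[ℝ] (H →ₗ[ℂ] H)) (α : Module.Dual ℝ V) : Submodule ℂ H where
  carrier := {ψ : H | ∀ v : V, ι v ψ = (α v : ℂ) • ψ}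
  add_mem' := by
    intro a b ha hb v
    rw [map_add, ha v, hb v, smul_add]
  zero_mem' := by intro v; simp
  smul_mem' := by
    intro c x hx v
    rw [LinearMap.map_smul, hx v, smul_comm]

/-- The set of weights of an abelian functional theory. -/
def weights (ι : V →ₗ[ℝ] (H →ₗ[ℂ] H)) : Set (Module.Dual ℝ V) :=
  {α : Module.Dual ℝ V | weightSpace ι α ≠ ⊥}

/-- The derivative of the density map along the set of pure states at `|Ψ⟩⟨Ψ|`,
applied to the tangent vector `φ ⊥ Ψ`: the functional `v ↦ 2 Re⟨φ, ι(v)Ψ⟩`. -/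
def derivDensity (ι : V →ₗ[ℝ] (H →ₗ[ℂ] H)) (Ψ φ : H) : Module.Dual ℝ V where
  toFun v := 2 * (inner ℂ φ (ι v Ψ) : ℂ).re
  map_add' v w := by simp [inner_add_right]; ring
  map_smul' c v := by
    simp only [map_smul, LinearMap.smul_apply, RingHom.id_apply, smul_eq_mul]
    rw [← algebraMap_smul ℂ c ((ι v) Ψ), Complex.coe_algebraMap, inner_smul_right]
    simp; ring

/-- `ρ` is a relative interior point of the convex set `C` (i.e. an interior point
of `C` within its affine span): every point of `C` lies on a segment inside `C`
having `ρ` in its (open) interior. -/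
def IsRelInterior {M : Type*} [AddCommGroup M] [Module ℝ M] (C : Set M) (ρ : M) : Prop :=
  ρ ∈ C ∧ ∀ σ ∈ C, ∃ τ ∈ C, ∃ t : ℝ, 0 < t ∧ t < 1 ∧ ρ = t • σ + (1 - t) • τ

/-- Strong orthogonality: componentwise orthogonality in every weight space. -/
def StronglyOrthogonal [FiniteDimensional ℂ H] (ι : V →ₗ[ℝ] (H →ₗ[ℂ] H)) (Φ Φ' : H) : Prop :=
  ∀ α : Module.Dual ℝ V, weightSpace ι α ≠ ⊥ →
    (inner ℂ ((weightSpace ι α).orthogonalProjectionOnto Φ)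
        ((weightSpace ι α).orthogonalProjectionOnto Φ') : ℂ) = 0

/-- The `k`-convex hull of a set. -/
def convk {M : Type*} [AddCommGroup M] [Module ℝ M] (k : ℕ) (X : Set M) : Set M :=
  {ρ : M | ∃ (t : Fin k → ℝ) (x : Fin k → M),
    (∀ i, 0 ≤ t i) ∧ (∑ i, t i) = 1 ∧ (∀ i, x i ∈ X) ∧ (∑ i, t i • x i) = ρ}

/-- The operator `A ⊗ id` on `H ⊗ ℂᵏ ≅ H ⊕ ⋯ ⊕ H` (k summands). -/
def opBar (k : ℕ) (A : H →ₗ[ℂ] H) :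
    (PiLp 2 fun _ : Fin k => H) →ₗ[ℂ] (PiLp 2 fun _ : Fin k => H) where
  toFun x := WithLp.toLp 2 (fun i => A (x i))
  map_add' x y := by ext i; simp [PiLp.add_apply]
  map_smul' c x := by ext i; simp [PiLp.smul_apply]

/-- The potential map `v ↦ ι(v) ⊗ id` of the `k`-convexified functional theory. -/
def potBar (k : ℕ) (ι : V →ₗ[ℝ] (H →ₗ[ℂ] H)) :
    V →ₗ[ℝ] ((PiLp 2 fun _ : Fin k => H) →ₗ[ℂ] (PiLp 2 fun _ : Fin k => H)) where
  toFun v := opBar k (ι v)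
  map_add' v w := by
    apply LinearMap.ext; intro x; ext i
    simp [opBar, map_add]
  map_smul' c v := by
    apply LinearMap.ext; intro x; ext i
    simp [opBar, map_smul]

/-- The subspace of potentials mapped to real multiples of the identity operator. -/
def scalarPart (ι : V →ₗ[ℝ] (H →ₗ[ℂ] H)) : Submodule ℝ V where
  carrier := {v : V | ∃ c : ℝ, ι v = c • (LinearMap.id : H →ₗ[ℂ] H)}
  add_mem' := by
    rintro a b ⟨c, hc⟩ ⟨d, hd⟩
    exact ⟨c + d, by rw [map_add, hc, hd, add_smul]⟩
  zero_mem' := ⟨0, by simp⟩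
  smul_mem' := by
    rintro a v ⟨c, hc⟩
    exact ⟨a * c, by rw [map_smul, hc, smul_smul]⟩

/-!
Commuting symmetric potentials are simultaneously diagonalizable, so `H` is the orthogonal
direct sum of the weight spaces. In an orthonormal basis `(b j)` of weight vectors, with
`b j` of weight `ω j`, the density of an ensemble state `Γ` is `∑ j ⟨b j, Γ b j⟩ • ω j`, a
convex combination of weights. Conversely, if `e α` is a unit vector of weight `α`, the pure
state `∑ α √(t α) • e α` has density `∑ α t α • α`. Since `|ψ⟩⟨ψ|` is an ensemble state with
the same density as `ψ`, this closes the cycle `ι*(P) ⊆ ι*(E) ⊆ conv Ω ⊆ ι*(P)`.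
-/

theorem Submodule.exists_mem_norm_eq_one {𝕜 E : Type*} [RCLike 𝕜] [NormedAddCommGroup E]
    [NormedSpace 𝕜 E] {K : Submodule 𝕜 E} (hK : K ≠ ⊥) : ∃ u ∈ K, ‖u‖ = 1 := by
  obtain ⟨x, hx, hx0⟩ := Submodule.exists_mem_ne_zero_of_ne_bot hK
  exact ⟨(‖x‖⁻¹ : 𝕜) • x, K.smul_mem _ hx, norm_smul_inv_norm hx0⟩

section Weights

variable {ι : V →ₗ[ℝ] (H →ₗ[ℂ] H)}

theorem inner_eq_zero_of_mem_weightSpace (hι : ∀ v, (ι v).IsSymmetric)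
    {α β : Module.Dual ℝ V} (hαβ : α ≠ β) {ψ φ : H}
    (hψ : ψ ∈ weightSpace ι α) (hφ : φ ∈ weightSpace ι β) : inner ℂ ψ φ = 0 := by
  obtain ⟨v, hv⟩ : ∃ v, α v ≠ β v := by
    by_contra! h
    exact hαβ (LinearMap.ext h)
  have h : (α v : ℂ) * inner ℂ ψ φ = (β v : ℂ) * inner ℂ ψ φ := by
    rw [← Complex.conj_ofReal, ← inner_smul_left, ← hψ v, hι v, hφ v, inner_smul_right]
  by_contra hne
  exact hv (by exact_mod_cast mul_right_cancel₀ hne h)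

theorem orthogonalFamily_weightSpace (hι : ∀ v, (ι v).IsSymmetric) :
    OrthogonalFamily ℂ (fun α => weightSpace ι α) fun α => (weightSpace ι α).subtypeₗᵢ :=
  fun _ _ hαβ ψ φ => inner_eq_zero_of_mem_weightSpace hι hαβ ψ.2 φ.2

theorem finite_weights [FiniteDimensional ℂ H] (hι : ∀ v, (ι v).IsSymmetric) :
    (weights ι).Finite :=
  Submodule.finite_ne_bot_of_iSupIndep (orthogonalFamily_weightSpace hι).independent

theorem eigenvalue_eq_pureDensity (hι : ∀ v, (ι v).IsSymmetric) {ψ : H} (hψ : ‖ψ‖ = 1)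
    {v : V} {c : ℂ} (hc : ι v ψ = c • ψ) : c = pureDensity ι ψ v := by
  have hc' : c = inner ℂ ψ (ι v ψ) := by
    rw [hc, inner_smul_right, inner_self_eq_norm_sq_to_K, hψ]
    simp
  rw [hc']
  exact ((hι v).coe_re_inner_self_apply ψ).symm

theorem exists_iInf_eigenspace_le_weightSpace (hι : ∀ v, (ι v).IsSymmetric) (χ : V → ℂ) :
    ∃ α, ⨅ v, Module.End.eigenspace (ι v) (χ v) ≤ weightSpace ι α := by
  set E := ⨅ v, Module.End.eigenspace (ι v) (χ v)
  have hE : ∀ ψ ∈ E, ∀ v, ι v ψ = χ v • ψ := fun ψ hψ v =>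
    Module.End.mem_eigenspace_iff.mp ((Submodule.mem_iInf _).mp hψ v)
  rcases eq_or_ne E ⊥ with hbot | hbot
  · exact ⟨0, hbot.le.trans bot_le⟩
  obtain ⟨u, huE, hu⟩ := Submodule.exists_mem_norm_eq_one hbot
  refine ⟨pureDensity ι u, fun φ hφ v => ?_⟩
  rw [hE φ hφ v, ← eigenvalue_eq_pureDensity hι hu (hE u huE v)]

theorem iSup_weightSpace_eq_top [FiniteDimensional ℂ H] (hι : ∀ v, (ι v).IsSymmetric)
    (habel : ∀ v w : V, ι v ∘ₗ ι w = ι w ∘ₗ ι v) :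
    ⨆ α, weightSpace ι α = ⊤ := by
  have hcomm : Pairwise (Function.onFun Commute fun v => ι v) := fun v w _ => habel v w
  rw [eq_top_iff, ← LinearMap.IsSymmetric.iSup_iInf_eq_top_of_commute hι hcomm]
  refine iSup_le fun χ => ?_
  obtain ⟨α, hα⟩ := exists_iInf_eigenspace_le_weightSpace hι χ
  exact hα.trans (le_iSup _ α)

open Classical in
theorem isInternal_weightSpace [FiniteDimensional ℂ H] (hι : ∀ v, (ι v).IsSymmetric)
    (habel : ∀ v w : V, ι v ∘ₗ ι w = ι w ∘ₗ ι v) :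
    DirectSum.IsInternal fun α : weights ι => weightSpace ι α := by
  rw [((orthogonalFamily_weightSpace hι).comp Subtype.val_injective).isInternal_iff]
  change (⨆ α : {α // weightSpace ι α ≠ ⊥}, weightSpace ι α)ᗮ = ⊥
  rw [iSup_ne_bot_subtype (weightSpace ι), iSup_weightSpace_eq_top hι habel,
    Submodule.top_orthogonal_eq_bot]

end Weights

section Densities

variable {ι : V →ₗ[ℝ] (H →ₗ[ℂ] H)} {κ : Type*} [Fintype κ] {ω : κ → Module.Dual ℝ V}

theorem exists_orthonormal_mem_weightSpace (hι : ∀ v, (ι v).IsSymmetric) :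
    ∃ e : weights ι → H, Orthonormal ℂ e ∧ ∀ α : weights ι, e α ∈ weightSpace ι α := by
  choose e he hnorm using fun α : weights ι => Submodule.exists_mem_norm_eq_one α.2
  exact ⟨e, ⟨hnorm, fun α β hαβ =>
    inner_eq_zero_of_mem_weightSpace hι (Subtype.val_injective.ne hαβ) (he α) (he β)⟩, he⟩

theorem pureDensity_sum_smul {e : κ → H} (he : Orthonormal ℂ e)
    (hω : ∀ j, e j ∈ weightSpace ι (ω j)) (c : κ → ℂ) :
    pureDensity ι (∑ j, c j • e j) = ∑ j, ‖c j‖ ^ 2 • ω j := by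
  ext v
  have hψ : ι v (∑ j, c j • e j) = ∑ j, (c j * ω j v) • e j := by
    rw [map_sum]
    refine Finset.sum_congr rfl fun j _ => ?_
    rw [map_smul, hω j v, smul_smul]
  change (inner ℂ _ (ι v _)).re = _
  rw [hψ, he.inner_sum, Complex.re_sum, LinearMap.sum_apply]
  refine Finset.sum_congr rfl fun j _ => ?_
  rw [← mul_assoc, Complex.conj_mul', LinearMap.smul_apply, smul_eq_mul]
  norm_cast

theorem traceDensity_eq_sum_smul (hι : ∀ v, (ι v).IsSymmetric) (b : OrthonormalBasis κ ℂ H)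
    (hb : ∀ j, b j ∈ weightSpace ι (ω j)) (Γ : H →ₗ[ℂ] H) :
    traceDensity ι Γ = ∑ j, (inner ℂ (b j) (Γ (b j))).re • ω j := by
  ext v
  change (LinearMap.trace ℂ H (ι v ∘ₗ Γ)).re = _
  rw [LinearMap.trace_eq_sum_inner _ b, Complex.re_sum, LinearMap.sum_apply]
  refine Finset.sum_congr rfl fun j _ => ?_
  rw [LinearMap.comp_apply, ← hι v, hb j v, inner_smul_left, Complex.conj_ofReal,
    Complex.re_ofReal_mul, LinearMap.smul_apply, smul_eq_mul, mul_comm]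

theorem traceDensity_mem_convexHull_weights [FiniteDimensional ℂ H]
    (hι : ∀ v, (ι v).IsSymmetric) (habel : ∀ v w : V, ι v ∘ₗ ι w = ι w ∘ₗ ι v)
    {Γ : H →ₗ[ℂ] H} (hΓ : IsEnsembleState Γ) :
    traceDensity ι Γ ∈ convexHull ℝ (weights ι) := by
  classical
  have := (finite_weights hι).fintype
  have hV := (orthogonalFamily_weightSpace hι).comp (Subtype.val_injective (p := (· ∈ weights ι)))
  set b := (isInternal_weightSpace hι habel).collectedOrthonormalBasis hV
    fun α => stdOrthonormalBasis ℂ (weightSpace ι α)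
  have hb : ∀ j, b j ∈ weightSpace ι j.1 :=
    (isInternal_weightSpace hι habel).collectedOrthonormalBasis_mem hV _
  have hsum : ∑ j, (inner ℂ (b j) (Γ (b j))).re = 1 := by
    rw [← Complex.re_sum, ← LinearMap.trace_eq_sum_inner, hΓ.2.2, Complex.one_re]
  rw [traceDensity_eq_sum_smul hι b hb]
  exact (convex_convexHull ℝ _).sum_mem (fun j _ => hΓ.2.1 (b j)) hsum
    fun j _ => subset_convexHull ℝ _ j.1.2

theorem exists_pureDensity_eq_of_mem_convexHull [FiniteDimensional ℂ H]
    (hι : ∀ v, (ι v).IsSymmetric) {ρ : Module.Dual ℝ V} (hρ : ρ ∈ convexHull ℝ (weights ι)) :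
    ∃ ψ : H, ‖ψ‖ = 1 ∧ pureDensity ι ψ = ρ := by
  have hfin := finite_weights hι
  let := hfin.fintype
  rw [hfin.convexHull_eq_image] at hρ
  obtain ⟨w, ⟨hw0, hw1⟩, rfl⟩ := hρ
  obtain ⟨e, he, hmem⟩ := exists_orthonormal_mem_weightSpace hι
  have hc : ∀ α, ‖(√(w α) : ℂ)‖ ^ 2 = w α := fun α => by
    rw [Complex.norm_real, Real.norm_of_nonneg (Real.sqrt_nonneg _), Real.sq_sqrt (hw0 α)]
  refine ⟨∑ α, (√(w α) : ℂ) • e α, ?_, ?_⟩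
  · have hnorm := he.orthogonalFamily.norm_sum (fun α => (√(w α) : ℂ)) Finset.univ
    simp only [LinearIsometry.toSpanSingleton_apply, hc, hw1] at hnorm
    exact (pow_eq_one_iff_of_nonneg (norm_nonneg _) two_ne_zero).mp hnorm
  · rw [pureDensity_sum_smul he hmem]
    simp only [hc]
    simp

theorem isEnsembleState_rankOne_self [FiniteDimensional ℂ H] {ψ : H} (hψ : ‖ψ‖ = 1) :
    IsEnsembleState (InnerProductSpace.rankOne ℂ ψ ψ : H →ₗ[ℂ] H) := by
  refine ⟨InnerProductSpace.isSymmetric_rankOne_self ψ,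
    (InnerProductSpace.isPositive_rankOne_self (𝕜 := ℂ) ψ).toLinearMap.re_inner_nonneg_right, ?_⟩
  rw [InnerProductSpace.trace_rankOne, inner_self_eq_norm_sq_to_K, hψ]
  simp

theorem traceDensity_rankOne_self [FiniteDimensional ℂ H] (ψ : H) :
    traceDensity ι (InnerProductSpace.rankOne ℂ ψ ψ : H →ₗ[ℂ] H) = pureDensity ι ψ := by
  ext v
  have hcomp : ι v ∘ₗ (InnerProductSpace.rankOne ℂ ψ ψ : H →ₗ[ℂ] H)
      = InnerProductSpace.rankOne ℂ (ι v ψ) ψ := by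
    ext x
    simp
  change (LinearMap.trace ℂ H _).re = _
  rw [hcomp, InnerProductSpace.trace_rankOne]
  rfl

end Densities

theorem abelian_representability_general [FiniteDimensional ℂ H]
    (ι : V →ₗ[ℝ] (H →ₗ[ℂ] H))
    (hι : ∀ v : V, (ι v).IsSymmetric)
    (habel : ∀ v w : V, ι v ∘ₗ ι w = ι w ∘ₗ ι v) :
    {σ : Module.Dual ℝ V | ∃ ψ : H, ‖ψ‖ = 1 ∧ pureDensity ι ψ = σ}
      = {σ : Module.Dual ℝ V | ∃ Γ : H →ₗ[ℂ] H, IsEnsembleState Γ ∧ traceDensity ι Γ = σ} ∧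
    {σ : Module.Dual ℝ V | ∃ Γ : H →ₗ[ℂ] H, IsEnsembleState Γ ∧ traceDensity ι Γ = σ}
      = convexHull ℝ (weights ι) := by
  set P := {σ : Module.Dual ℝ V | ∃ ψ : H, ‖ψ‖ = 1 ∧ pureDensity ι ψ = σ}
  set E := {σ : Module.Dual ℝ V | ∃ Γ : H →ₗ[ℂ] H, IsEnsembleState Γ ∧ traceDensity ι Γ = σ}
  have hPE : P ⊆ E := by
    rintro _ ⟨ψ, hψ, rfl⟩
    exact ⟨_, isEnsembleState_rankOne_self hψ, traceDensity_rankOne_self ψ⟩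
  have hEC : E ⊆ convexHull ℝ (weights ι) := by
    rintro _ ⟨Γ, hΓ, rfl⟩
    exact traceDensity_mem_convexHull_weights hι habel hΓ
  have hCP : convexHull ℝ (weights ι) ⊆ P := fun _ hρ =>
    exists_pureDensity_eq_of_mem_convexHull hι hρ
  exact ⟨hPE.antisymm (hEC.trans hCP), hEC.antisymm (hCP.trans hPE)⟩

/-- representability in abelian functional theories. -/
theorem abelian_representability [FiniteDimensional ℝ V] [FiniteDimensional ℂ H] [Nontrivial H]
    (ι : V →ₗ[ℝ] (H →ₗ[ℂ] H)) (W : H →ₗ[ℂ] H)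
    (hι : ∀ v : V, (ι v).IsSymmetric) (hW : W.IsSymmetric)
    (habel : ∀ v w : V, ι v ∘ₗ ι w = ι w ∘ₗ ι v) :
    {σ : Module.Dual ℝ V | ∃ ψ : H, ‖ψ‖ = 1 ∧ pureDensity ι ψ = σ}
      = {σ : Module.Dual ℝ V | ∃ Γ : H →ₗ[ℂ] H, IsEnsembleState Γ ∧ traceDensity ι Γ = σ} ∧
    {σ : Module.Dual ℝ V | ∃ Γ : H →ₗ[ℂ] H, IsEnsembleState Γ ∧ traceDensity ι Γ = σ}
      = convexHull ℝ (weights ι) :=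
  abelian_representability_general ι hι habel

end
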